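/- The auxiliary map Φ̃ : Ω̄ → ℝ² defined by Φ̃(θ¹,θ²) := ( Φ₁(θ¹), (1 − θ¹/π) Φ₂(0,θ²) + (θ¹/π) Φ₂(π,θ²) ) is continuous and injective on the closed rectangle Ω̄ = [0,π] × [0,2π]. -/

import Mathlib

open Real Set MeasureTheory intervalIntegral

/-!
Both coordinates are built from primitives of positive continuous functions, so they are
continuous and strictly increasing. `Φ₁` is `arccos` of a strictly decreasing affine image of the
λ-area `θ ↦ ∫₀^θ ∫₀^{2π} λ sin σ`, which the normalization keeps inside `[-1, 1]`; for fixed `θ¹`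
the second coordinate is a convex combination of the strictly increasing maps `Φ₂(0, ·)` and
`Φ₂(π, ·)`. Hence `Φ̃` is a skew product whose base map and fibre maps are all injective.
-/

theorem continuousOn_parametric_intervalIntegral_of_continuousOn {E : Type*}
    [NormedAddCommGroup E] [NormedSpace ℝ E] {f : ℝ → ℝ → E} {a b c d : ℝ}
    (hab : a ≤ b) (hcd : c ≤ d) (hf : ContinuousOn (Function.uncurry f) (Icc a b ×ˢ Icc c d)) :
    ContinuousOn (fun x => ∫ t in c..d, f x t) (Icc a b) := by
  -- Clamping both variables into the rectangle extends `f` to a continuous function on `ℝ × ℝ`.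
  have hclamp : Continuous fun p : ℝ × ℝ =>
      ((projIcc a b hab p.1 : ℝ), (projIcc c d hcd p.2 : ℝ)) := by
    fun_prop
  have hext : Continuous (Function.uncurry fun x t => f (projIcc a b hab x) (projIcc c d hcd t)) :=
    hf.comp_continuous hclamp fun p => ⟨(projIcc a b hab p.1).2, (projIcc c d hcd p.2).2⟩
  refine (continuous_parametric_intervalIntegral_of_continuous' hext c d).continuousOn.congr
    fun x hx => integral_congr fun t ht => ?_
  rw [uIcc_of_le hcd] at ht
  simp only [projIcc_of_mem hab hx, projIcc_of_mem hcd ht]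

theorem continuousOn_primitive_of_continuousOn {f : ℝ → ℝ} {a b : ℝ} (hab : a ≤ b)
    (hf : ContinuousOn f (Icc a b)) :
    ContinuousOn (fun t => ∫ x in a..t, f x) (Icc a b) := by
  simpa only [uIcc_of_le hab] using
    continuousOn_primitive_interval' (hf.intervalIntegrable_of_Icc hab) left_mem_uIcc

theorem strictMonoOn_primitive_of_pos {f : ℝ → ℝ} {a b : ℝ} (hf : ContinuousOn f (Icc a b))
    (hpos : ∀ x ∈ Ioo a b, 0 < f x) :
    StrictMonoOn (fun t => ∫ x in a..t, f x) (Icc a b) := by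
  intro s hs t ht hst
  have hint : ∀ u v, a ≤ u → u ≤ v → v ≤ b → IntervalIntegrable f volume u v :=
    fun u v hau huv hvb => (hf.mono (Icc_subset_Icc hau hvb)).intervalIntegrable_of_Icc huv
  have hsub := integral_interval_sub_left (hint a t le_rfl ht.1 ht.2) (hint a s le_rfl hs.1 hs.2)
  have hgap : 0 < ∫ x in s..t, f x :=
    intervalIntegral_pos_of_pos_on (hint s t hs.1 hst.le ht.2)
      (fun x hx => hpos x ⟨hs.1.trans_lt hx.1, hx.2.trans_le ht.2⟩) hst
  show ∫ x in a..s, f x < ∫ x in a..t, f x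
  linarith

theorem strictMonoOn_convexCombination {α : Type*} [Preorder α] {f g : α → ℝ} {s : Set α}
    (hf : StrictMonoOn f s) (hg : StrictMonoOn g s) {c : ℝ} (hc₀ : 0 ≤ c) (hc₁ : c ≤ 1) :
    StrictMonoOn (fun x => (1 - c) * f x + c * g x) s := by
  intro x hx y hy hxy
  have hfxy := hf hx hy hxy
  have hgxy := hg hx hy hxy
  rcases hc₁.lt_or_eq with hc₁ | rfl
  · have := mul_lt_mul_of_pos_left hfxy (sub_pos.2 hc₁)
    have := mul_le_mul_of_nonneg_left hgxy.le hc₀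
    linarith
  · simpa using hgxy

theorem Set.InjOn.skewProd {α β γ δ : Type*} {f : α → γ} {g : α → β → δ} {s : Set α}
    {t : Set β} (hf : InjOn f s) (hg : ∀ x ∈ s, InjOn (g x) t) :
    InjOn (fun p : α × β => (f p.1, g p.1 p.2)) (s ×ˢ t) := by
  intro p hp q hq h
  obtain ⟨hfpq, hgpq⟩ := Prod.mk.inj h
  have h₁ : p.1 = q.1 := hf hp.1 hq.1 hfpq
  rw [h₁] at hgpq
  exact Prod.ext h₁ (hg q.1 hq.1 hp.2 hq.2 hgpq)

-- `polarReparam` and `azimuthReparam` are the paper's `Φ₁` and `Φ₂`.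
noncomputable def polarMass (lam : ℝ → ℝ → ℝ) (θ : ℝ) : ℝ :=
  ∫ σ in (0:ℝ)..θ, ∫ τ in (0:ℝ)..(2*π), lam σ τ * sin σ

noncomputable def polarReparam (lam : ℝ → ℝ → ℝ) (θ : ℝ) : ℝ :=
  arccos (1 - (1/(2*π)) * polarMass lam θ)

noncomputable def azimuthReparam (lam : ℝ → ℝ → ℝ) (θ₁ θ₂ : ℝ) : ℝ :=
  2*π * (∫ τ in (0:ℝ)..θ₂, lam θ₁ τ) / ∫ τ in (0:ℝ)..(2*π), lam θ₁ τ

section Reparametrization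

variable {lam : ℝ → ℝ → ℝ}
  (hcont : ContinuousOn (fun p : ℝ × ℝ => lam p.1 p.2) (Icc (0:ℝ) π ×ˢ Icc (0:ℝ) (2*π)))
  (hpos : ∀ p ∈ Icc (0:ℝ) π ×ˢ Icc (0:ℝ) (2*π), 0 < lam p.1 p.2)

include hcont in
theorem continuousOn_slice {θ₁ : ℝ} (hθ₁ : θ₁ ∈ Icc 0 π) :
    ContinuousOn (lam θ₁) (Icc 0 (2*π)) :=
  hcont.comp (continuousOn_const.prodMk continuousOn_id) fun _ hτ => ⟨hθ₁, hτ⟩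

include hcont hpos in
theorem strictMonoOn_azimuthReparam {θ₁ : ℝ} (hθ₁ : θ₁ ∈ Icc 0 π) :
    StrictMonoOn (azimuthReparam lam θ₁) (Icc 0 (2*π)) := by
  have hmono := strictMonoOn_primitive_of_pos (continuousOn_slice hcont hθ₁)
    fun τ hτ => hpos (θ₁, τ) ⟨hθ₁, Ioo_subset_Icc_self hτ⟩
  have h2π : (0:ℝ) < 2*π := two_pi_pos
  have htotal : 0 < ∫ τ in (0:ℝ)..(2*π), lam θ₁ τ := by
    simpa using hmono (left_mem_Icc.2 h2π.le) (right_mem_Icc.2 h2π.le) h2π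
  intro s hs t ht hst
  have := hmono hs ht hst
  unfold azimuthReparam
  gcongr

include hcont in
theorem continuousOn_azimuthReparam {θ₁ : ℝ} (hθ₁ : θ₁ ∈ Icc 0 π) :
    ContinuousOn (azimuthReparam lam θ₁) (Icc 0 (2*π)) :=
  (continuousOn_const.mul (continuousOn_primitive_of_continuousOn two_pi_pos.le
    (continuousOn_slice hcont hθ₁))).div_const _

include hcont in
theorem continuousOn_sliceMass :
    ContinuousOn (fun σ => ∫ τ in (0:ℝ)..(2*π), lam σ τ * sin σ) (Icc 0 π) :=
  continuousOn_parametric_intervalIntegral_of_continuousOn pi_pos.le two_pi_pos.le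
    (hcont.mul (continuous_sin.comp continuous_fst).continuousOn)

include hcont hpos in
theorem sliceMass_pos {σ : ℝ} (hσ : σ ∈ Ioo 0 π) :
    0 < ∫ τ in (0:ℝ)..(2*π), lam σ τ * sin σ := by
  rw [intervalIntegral.integral_mul_const]
  refine mul_pos (intervalIntegral_pos_of_pos_on ?_ (fun τ hτ => ?_) two_pi_pos)
    (sin_pos_of_pos_of_lt_pi hσ.1 hσ.2)
  · exact (continuousOn_slice hcont (Ioo_subset_Icc_self hσ)).intervalIntegrable_of_Icc
      two_pi_pos.le
  · exact hpos (σ, τ) ⟨Ioo_subset_Icc_self hσ, Ioo_subset_Icc_self hτ⟩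

include hcont hpos in
theorem strictMonoOn_polarMass : StrictMonoOn (polarMass lam) (Icc 0 π) :=
  strictMonoOn_primitive_of_pos (continuousOn_sliceMass hcont) fun _ => sliceMass_pos hcont hpos

include hcont hpos in
theorem polarMass_mem_Icc (hnorm : polarMass lam π = 4*π) {θ : ℝ} (hθ : θ ∈ Icc 0 π) :
    polarMass lam θ ∈ Icc 0 (4*π) := by
  have hmono := (strictMonoOn_polarMass hcont hpos).monotoneOn
  refine ⟨?_, hnorm ▸ hmono hθ (right_mem_Icc.2 pi_pos.le) hθ.2⟩
  simpa [polarMass] using hmono (left_mem_Icc.2 pi_pos.le) hθ hθ.1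

include hcont hpos in
theorem strictMonoOn_polarReparam (hnorm : polarMass lam π = 4*π) :
    StrictMonoOn (polarReparam lam) (Icc 0 π) := by
  have hscale : (0:ℝ) < 1/(2*π) := by positivity
  have harg : StrictAntiOn (fun θ => 1 - (1/(2*π)) * polarMass lam θ) (Icc 0 π) :=
    fun s hs t ht hst => by
      have := mul_lt_mul_of_pos_left (strictMonoOn_polarMass hcont hpos hs ht hst) hscale
      linarith
  refine strictAntiOn_arccos.comp harg fun θ hθ => ?_
  obtain ⟨hmass₀, hmass₄π⟩ := polarMass_mem_Icc hcont hpos hnorm hθ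
  have hle : (1/(2*π)) * polarMass lam θ ≤ 2 := by
    rw [one_div_mul_eq_div, div_le_iff₀ two_pi_pos]
    linarith
  have hnonneg : 0 ≤ (1/(2*π)) * polarMass lam θ := mul_nonneg hscale.le hmass₀
  constructor <;> linarith

include hcont in
theorem continuousOn_polarReparam : ContinuousOn (polarReparam lam) (Icc 0 π) :=
  continuous_arccos.comp_continuousOn (continuousOn_const.sub (continuousOn_const.mul
    (continuousOn_primitive_of_continuousOn pi_pos.le (continuousOn_sliceMass hcont))))

end Reparametrization

/-- The auxiliary map
`Φ̃(θ¹,θ²) := ( Φ₁(θ¹), (1 − θ¹/π) Φ₂(0,θ²) + (θ¹/π) Φ₂(π,θ²) )`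
is continuous and injective on the closed rectangle `Ω̄ = [0,π] × [0,2π]`. -/
theorem stmt_5
    (lam : ℝ → ℝ → ℝ)
    (hcont : ContinuousOn (fun p : ℝ × ℝ => lam p.1 p.2)
      (Set.Icc (0:ℝ) π ×ˢ Set.Icc (0:ℝ) (2*π)))
    (hpos : ∀ p ∈ Set.Icc (0:ℝ) π ×ˢ Set.Icc (0:ℝ) (2*π), 0 < lam p.1 p.2)
    (hnorm : (∫ σ in (0:ℝ)..π, ∫ τ in (0:ℝ)..(2*π), lam σ τ * Real.sin σ) = 4*π)
    (Φ₁ : ℝ → ℝ)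
    (hΦ₁ : ∀ θ, Φ₁ θ = Real.arccos
      (1 - (1/(2*π)) * ∫ σ in (0:ℝ)..θ, ∫ τ in (0:ℝ)..(2*π), lam σ τ * Real.sin σ))
    (Φ₂ : ℝ → ℝ → ℝ)
    (hΦ₂ : ∀ θ1 θ2, Φ₂ θ1 θ2 =
      2*π * (∫ τ in (0:ℝ)..θ2, lam θ1 τ) / ∫ τ in (0:ℝ)..(2*π), lam θ1 τ)
    (Φt : ℝ × ℝ → ℝ × ℝ)
    (hΦt : ∀ p : ℝ × ℝ, Φt p =
      (Φ₁ p.1, (1 - p.1/π) * Φ₂ 0 p.2 + (p.1/π) * Φ₂ π p.2)) :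
    ContinuousOn Φt (Set.Icc (0:ℝ) π ×ˢ Set.Icc (0:ℝ) (2*π)) ∧
    Set.InjOn Φt (Set.Icc (0:ℝ) π ×ˢ Set.Icc (0:ℝ) (2*π)) := by
  obtain rfl : Φ₁ = polarReparam lam := funext hΦ₁
  obtain rfl : Φ₂ = azimuthReparam lam := funext₂ hΦ₂
  obtain rfl := funext hΦt
  have h₀ : (0:ℝ) ∈ Icc 0 π := left_mem_Icc.2 pi_pos.le
  have hπ : π ∈ Icc 0 π := right_mem_Icc.2 pi_pos.le
  have hweight : ContinuousOn (fun p : ℝ × ℝ => p.1 / π) (Icc 0 π ×ˢ Icc 0 (2*π)) := by fun_prop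
  refine ⟨?_, InjOn.skewProd (g := fun θ θ₂ =>
    (1 - θ/π) * azimuthReparam lam 0 θ₂ + (θ/π) * azimuthReparam lam π θ₂)
    (strictMonoOn_polarReparam hcont hpos hnorm).injOn fun θ hθ => ?_⟩
  · refine ((continuousOn_polarReparam hcont).comp continuousOn_fst fun _ hp => hp.1).prodMk
      (((continuousOn_const.sub hweight).mul ?_).add (hweight.mul ?_))
    · exact (continuousOn_azimuthReparam hcont h₀).comp continuousOn_snd fun _ hp => hp.2
    · exact (continuousOn_azimuthReparam hcont hπ).comp continuousOn_snd fun _ hp => hp.2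
  · exact (strictMonoOn_convexCombination (strictMonoOn_azimuthReparam hcont hpos h₀)
      (strictMonoOn_azimuthReparam hcont hpos hπ) (div_nonneg hθ.1 pi_pos.le)
      ((div_le_one pi_pos).2 hθ.2)).injOn
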